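/- Let M ∈ ℤ^{n×n} be nonsingular and suppose the lattice graph 𝒢(M) has no nontrivial 4-cycles, i.e., whenever a, b, c, d ∈ {±e₁,…,±eₙ} satisfy a + b + c + d ≡ 0 (mod M), then b = −a or c = −a or d = −a. Then every graph automorphism φ of 𝒢(M) with φ(0) = 0 is an automorphism of the additive group ℤⁿ/Mℤⁿ, i.e., φ(x + y) = φ(x) + φ(y) for all x, y ∈ ℤⁿ/Mℤⁿ. -/

import Mathlib

/-!
Let `S = {±eᵢ}` in `ℤⁿ/Mℤⁿ` and let `φ` be a graph automorphism with `φ 0 = 0`. Edges go to edges,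
so every increment `φ (x + s) - φ x` with `s ∈ S` lies in `S`. Without nontrivial 4-cycles, two
vertices `u` and `u + s + t` (`t ≠ -s`) have no common neighbours besides `u + s` and `u + t`.
Since `φ` preserves common neighbours, comparing the squares on `x, x + s, x + t, x + s + t` (for
`t ≠ ±s`) and the paths `x, x + s, x + 2s` shows that the increment along `s` does not change under
translation by any `t ∈ S`. As `S` generates the group, `φ (x + s) - φ x = φ s` for all `x`; the
same translation argument applied to `x ↦ φ (x + y) - φ x` then gives additivity.
-/

open Matrix

/-- The subgroup (submodule) `Mℤⁿ` generated by the columns of `M`. -/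
def colSpan {ι : Type*} [Fintype ι] [DecidableEq ι] (M : Matrix ι ι ℤ) :
    Submodule ℤ (ι → ℤ) :=
  LinearMap.range M.mulVecLin

/-- The vertex set `ℤⁿ/Mℤⁿ` of the lattice graph. -/
abbrev LatticeVertex {ι : Type*} [Fintype ι] [DecidableEq ι] (M : Matrix ι ι ℤ) :=
  (ι → ℤ) ⧸ colSpan M

/-- The `i`-th standard basis vector of `ℤⁿ`. -/
def stdBasis {ι : Type*} [DecidableEq ι] (i : ι) : ι → ℤ := Pi.single i 1

/-- The lattice graph `𝒢(M)`. -/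
def latticeGraph {ι : Type*} [Fintype ι] [DecidableEq ι] (M : Matrix ι ι ℤ) :
    SimpleGraph (LatticeVertex M) where
  Adj v w := v ≠ w ∧ ∃ i : ι,
      v - w = Submodule.Quotient.mk (stdBasis i) ∨
      w - v = Submodule.Quotient.mk (stdBasis i)
  symm := ⟨by rintro v w ⟨hne, i, h⟩; exact ⟨hne.symm, i, h.symm⟩⟩
  loopless := ⟨fun v h => h.1 rfl⟩

/-- The subgraph of `𝒢(M)` spanned by the directions in `S`. -/
def spannedSubgraph {ι : Type*} [Fintype ι] [DecidableEq ι] (M : Matrix ι ι ℤ) (S : Set ι) :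
    SimpleGraph (AddSubgroup.closure
      ((fun i => (Submodule.Quotient.mk (stdBasis i) : LatticeVertex M)) '' S)) where
  Adj v w := v ≠ w ∧ ∃ i ∈ S,
      (v : LatticeVertex M) - (w : LatticeVertex M) = Submodule.Quotient.mk (stdBasis i) ∨
      (w : LatticeVertex M) - (v : LatticeVertex M) = Submodule.Quotient.mk (stdBasis i)
  symm := ⟨by rintro v w ⟨hne, i, hiS, h⟩; exact ⟨hne.symm, i, hiS, h.symm⟩⟩
  loopless := ⟨fun v h => h.1 rfl⟩

/-- The projection of `𝒢(M)` over `e_j`: the subgraph spanned by all other directions. -/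
def projGraph {ι : Type*} [Fintype ι] [DecidableEq ι] (M : Matrix ι ι ℤ) (j : ι) :=
  spannedSubgraph M {i | i ≠ j}

/-- The torus graph `T(a₁,…,aₙ)`. -/
def torusGraph {n : ℕ} (a : Fin n → ℕ) : SimpleGraph (∀ i, ZMod (a i)) where
  Adj x y := x ≠ y ∧ ∃ i, (∀ j, j ≠ i → x j = y j) ∧ (x i = y i + 1 ∨ y i = x i + 1)
  symm := ⟨by
    rintro x y ⟨hne, i, hj, h⟩
    exact ⟨hne.symm, i, fun j hji => (hj j hji).symm, h.symm⟩⟩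
  loopless := ⟨fun x h => h.1 rfl⟩

/-- A signed permutation matrix: exactly one nonzero entry, equal to `±1`,
in each row and each column. -/
def IsSignedPerm {n : ℕ} (P : Matrix (Fin n) (Fin n) ℤ) : Prop :=
  (∀ i j, P i j = 0 ∨ P i j = 1 ∨ P i j = -1) ∧
  (∀ i, ∃! j, P i j ≠ 0) ∧ (∀ j, ∃! i, P i j ≠ 0)

/-- `𝒢(M)` is linearly symmetric: for every `i` there is a signed permutation matrix
inducing an automorphism of `𝒢(M)` sending `e₁` to `±e_i`. -/
def IsLinearlySymmetric {n : ℕ} (M : Matrix (Fin n) (Fin n) ℤ) : Prop :=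
  ∀ i : Fin n, ∃ P : Matrix (Fin n) (Fin n) ℤ, IsSignedPerm P ∧
    (∃ Q : Matrix (Fin n) (Fin n) ℤ, P * M = M * Q) ∧
    (P.mulVec (stdBasis (⟨0, i.pos⟩ : Fin n)) = stdBasis i ∨
      P.mulVec (stdBasis (⟨0, i.pos⟩ : Fin n)) = -stdBasis i)

open Function SimpleGraph

def NoNontrivialFourCycles {A : Type*} [AddGroup A] (S : Set A) : Prop :=
  ∀ a ∈ S, ∀ b ∈ S, ∀ c ∈ S, ∀ d ∈ S, a + b + c + d = 0 → b = -a ∨ c = -a ∨ d = -a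

theorem apply_eq_apply_zero_of_periodic {A β : Type*} [AddGroup A] {S : Set A}
    (hS : AddSubgroup.closure S = ⊤) {f : A → β} (hf : ∀ s ∈ S, Periodic f s) (x : A) :
    f x = f 0 := by
  have hx : Periodic f x :=
    AddSubgroup.closure_induction (p := fun y _ => Periodic f y) hf (fun _ => by rw [add_zero])
      (fun _ _ _ _ h₁ h₂ => h₁.add_period h₂) (fun _ _ h => h.neg) (hS ▸ AddSubgroup.mem_top x)
  simpa using hx 0

section AddCommGroup

variable {A : Type*} [AddCommGroup A] {S : Set A}

theorem NoNontrivialFourCycles.eq_or_eq (h4 : NoNontrivialFourCycles S)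
    (hneg : ∀ s ∈ S, -s ∈ S) {a b c d : A} (ha : a ∈ S) (hb : b ∈ S) (hc : c ∈ S) (hd : d ∈ S)
    (hba : b ≠ -a) (h : c + d = a + b) : c = a ∨ c = b := by
  rcases h4 a ha b hb (-c) (hneg c hc) (-d) (hneg d hd) (by rw [← h]; abel)
    with hb' | hc' | hd'
  · exact absurd hb' hba
  · exact .inl (neg_inj.mp hc')
  · right
    rw [neg_inj.mp hd'] at h
    exact add_right_cancel (h.trans (add_comm a b))

theorem addCayley_adj_iff_sub_mem (hneg : ∀ s ∈ S, -s ∈ S) (hS0 : (0 : A) ∉ S) {u v : A} :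
    (addCayley S).Adj u v ↔ v - u ∈ S := by
  rw [addCayley_adj]
  constructor
  · rintro ⟨-, h | h⟩
    · rwa [sub_eq_neg_add]
    · simpa [sub_eq_neg_add] using hneg _ h
  · intro h
    refine ⟨fun huv => hS0 (by rwa [huv, sub_self] at h), .inl ?_⟩
    rwa [← sub_eq_neg_add]

namespace SimpleGraph.Iso

variable (φ : addCayley S ≃g addCayley S)

theorem sub_mem_iff (hneg : ∀ s ∈ S, -s ∈ S) (hS0 : (0 : A) ∉ S) {u v : A} :
    φ v - φ u ∈ S ↔ v - u ∈ S := by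
  rw [← addCayley_adj_iff_sub_mem hneg hS0, ← addCayley_adj_iff_sub_mem hneg hS0, φ.map_adj_iff]

theorem map_add_sub_map_mem (hneg : ∀ s ∈ S, -s ∈ S) (hS0 : (0 : A) ∉ S) (x : A) {s : A}
    (hs : s ∈ S) : φ (x + s) - φ x ∈ S :=
  (φ.sub_mem_iff hneg hS0).mpr (by rwa [add_sub_cancel_left])

theorem map_add_add_sub_map_add_of_ne (h4 : NoNontrivialFourCycles S)
    (hneg : ∀ s ∈ S, -s ∈ S) (hS0 : (0 : A) ∉ S) (x : A) {s t : A} (hs : s ∈ S) (ht : t ∈ S)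
    (hts : t ≠ s) (hts' : t ≠ -s) : φ (x + t + s) - φ (x + t) = φ (x + s) - φ x := by
  have hsum : (φ (x + s) - φ x) + (φ (x + t + s) - φ (x + s)) =
      (φ (x + t + s) - φ (x + t)) + (φ (x + t) - φ x) := by abel
  have hne : φ (x + t) - φ x ≠ -(φ (x + t + s) - φ (x + t)) := by
    intro h
    have h' : φ (x + t + s) = φ x := by
      rw [← sub_eq_zero, ← sub_add_sub_cancel _ (φ (x + t)), h, add_neg_cancel]
    have h'' := φ.injective h'
    rw [add_assoc, add_eq_left] at h''
    exact hts' (eq_neg_of_add_eq_zero_left h'')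
  have hb : φ (x + t + s) - φ (x + s) ∈ S := by
    rw [add_right_comm]
    exact φ.map_add_sub_map_mem hneg hS0 (x + s) ht
  rcases h4.eq_or_eq hneg (φ.map_add_sub_map_mem hneg hS0 (x + t) hs)
    (φ.map_add_sub_map_mem hneg hS0 x ht) (φ.map_add_sub_map_mem hneg hS0 x hs) hb hne hsum
    with h | h
  · exact h.symm
  · exact absurd (add_left_cancel (φ.injective (sub_left_inj.mp h))).symm hts

theorem map_add_add_sub_map_add_self (h4 : NoNontrivialFourCycles S)
    (hneg : ∀ s ∈ S, -s ∈ S) (hS : ∀ s ∈ S, s ≠ -s) (x : A) {s : A} (hs : s ∈ S) :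
    φ (x + s + s) - φ (x + s) = φ (x + s) - φ x := by
  have hS0 : (0 : A) ∉ S := fun h0 => hS 0 h0 neg_zero.symm
  set b := φ (x + s + s) - φ (x + s)
  -- `y` completes the image of the path `x, x + s, x + s + s` to a square; pulled back, it is a
  -- common neighbour of `x` and `x + s + s`, hence equals `x + s`.
  set y := φ.symm (φ x + b)
  have hxy : y - x ∈ S := by
    rw [← φ.sub_mem_iff hneg hS0, φ.apply_symm_apply, add_sub_cancel_left]
    exact φ.map_add_sub_map_mem hneg hS0 (x + s) hs
  have hyz : x + s + s - y ∈ S := by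
    rw [← φ.sub_mem_iff hneg hS0, φ.apply_symm_apply]
    convert φ.map_add_sub_map_mem hneg hS0 x hs using 1
    simp only [b]
    abel
  have hyx : y - x = s := by
    rcases h4.eq_or_eq hneg hs hs hxy hyz (hS s hs) (by abel) with h | h <;> exact h
  have hy : φ (x + s) = φ x + b := by
    rw [← eq_add_of_sub_eq' hyx, φ.apply_symm_apply]
  exact eq_sub_of_add_eq' hy.symm

theorem map_add_add_sub_map_add (h4 : NoNontrivialFourCycles S)
    (hneg : ∀ s ∈ S, -s ∈ S) (hS : ∀ s ∈ S, s ≠ -s) (x : A) {s t : A} (hs : s ∈ S)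
    (ht : t ∈ S) : φ (x + t + s) - φ (x + t) = φ (x + s) - φ x := by
  by_cases hts : t = s
  · subst hts
    exact φ.map_add_add_sub_map_add_self h4 hneg hS x hs
  by_cases hts' : t = -s
  · subst hts'
    have h := φ.map_add_add_sub_map_add_self h4 hneg hS (x + -s) hs
    rw [neg_add_cancel_right] at h ⊢
    exact h.symm
  exact φ.map_add_add_sub_map_add_of_ne h4 hneg (fun h0 => hS 0 h0 neg_zero.symm) x hs ht hts hts'

theorem map_add_of_mem (h4 : NoNontrivialFourCycles S) (hneg : ∀ s ∈ S, -s ∈ S)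
    (hS : ∀ s ∈ S, s ≠ -s) (hgen : AddSubgroup.closure S = ⊤) (hφ : φ 0 = 0) (x : A) {s : A}
    (hs : s ∈ S) : φ (x + s) = φ x + φ s := by
  have h := apply_eq_apply_zero_of_periodic hgen (f := fun x => φ (x + s) - φ x)
    (fun t ht y => φ.map_add_add_sub_map_add h4 hneg hS y hs ht) x
  simp only [zero_add, hφ, sub_zero] at h
  rw [← h, add_sub_cancel]

theorem map_add_of_noNontrivialFourCycles (h4 : NoNontrivialFourCycles S)
    (hneg : ∀ s ∈ S, -s ∈ S) (hS : ∀ s ∈ S, s ≠ -s) (hgen : AddSubgroup.closure S = ⊤)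
    (hφ : φ 0 = 0) (x y : A) : φ (x + y) = φ x + φ y := by
  have h := apply_eq_apply_zero_of_periodic hgen (f := fun x => φ (x + y) - φ x)
    (fun s hs z => by
      dsimp only
      rw [add_right_comm, φ.map_add_of_mem h4 hneg hS hgen hφ (z + y) hs,
        φ.map_add_of_mem h4 hneg hS hgen hφ z hs]
      abel) x
  simp only [zero_add, hφ, sub_zero] at h
  rw [← h, add_sub_cancel]

end SimpleGraph.Iso

end AddCommGroup

def signedBasis (ι : Type*) [DecidableEq ι] : Set (ι → ℤ) :=
  {a | ∃ i, a = _root_.stdBasis i ∨ a = -_root_.stdBasis i}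

section Lattice

variable {ι : Type*} [DecidableEq ι]

theorem neg_mem_signedBasis {a : ι → ℤ} (ha : a ∈ signedBasis ι) : -a ∈ signedBasis ι := by
  obtain ⟨i, rfl | rfl⟩ := ha
  exacts [⟨i, .inr rfl⟩, ⟨i, .inl (neg_neg _)⟩]

theorem ne_neg_of_mem_signedBasis {a : ι → ℤ} (ha : a ∈ signedBasis ι) : a ≠ -a := by
  obtain ⟨i, rfl | rfl⟩ := ha <;> intro h <;> simpa [_root_.stdBasis] using congrFun h i

variable [Fintype ι] {M : Matrix ι ι ℤ}

def latticeGens (M : Matrix ι ι ℤ) : Set (LatticeVertex M) :=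
  Submodule.Quotient.mk '' signedBasis ι

theorem mem_latticeGens_iff {s : LatticeVertex M} :
    s ∈ latticeGens M ↔ ∃ i, s = Submodule.Quotient.mk (_root_.stdBasis i) ∨
      s = -Submodule.Quotient.mk (_root_.stdBasis i) := by
  constructor
  · rintro ⟨a, ⟨i, rfl | rfl⟩, rfl⟩
    exacts [⟨i, .inl rfl⟩, ⟨i, .inr (Submodule.Quotient.mk_neg _)⟩]
  · rintro ⟨i, rfl | rfl⟩
    exacts [⟨_, ⟨i, .inl rfl⟩, rfl⟩, ⟨_, ⟨i, .inr rfl⟩, Submodule.Quotient.mk_neg _⟩]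

theorem latticeGraph_eq_addCayley : latticeGraph M = addCayley (latticeGens M) := by
  ext u v
  simp only [latticeGraph, addCayley_adj, mem_latticeGens_iff, neg_add_eq_sub, ← exists_or]
  refine and_congr_right fun _ => exists_congr fun i => ?_
  rw [← neg_sub u v, neg_inj, neg_eq_iff_eq_neg]
  tauto

theorem neg_mem_latticeGens {s : LatticeVertex M} (hs : s ∈ latticeGens M) :
    -s ∈ latticeGens M := by
  obtain ⟨a, ha, rfl⟩ := hs
  exact ⟨-a, neg_mem_signedBasis ha, Submodule.Quotient.mk_neg _⟩

theorem closure_latticeGens : AddSubgroup.closure (latticeGens M) = ⊤ := by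
  have hspan : Submodule.span ℤ ((colSpan M).mkQ '' Set.range _root_.stdBasis) = ⊤ := by
    have : Set.range (_root_.stdBasis (ι := ι)) = Set.range (Pi.basisFun ℤ ι) := by
      ext; simp [_root_.stdBasis, Pi.basisFun_apply]
    rw [Submodule.span_image, this, Module.Basis.span_eq, Submodule.map_top, Submodule.range_mkQ]
  have hsub : Set.range _root_.stdBasis ⊆ signedBasis ι := by
    rintro _ ⟨i, rfl⟩
    exact ⟨i, .inl rfl⟩
  refine eq_top_mono (AddSubgroup.closure_mono (Set.image_mono hsub)) ?_
  rw [← Submodule.span_int_eq_addSubgroupClosure]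
  exact congrArg Submodule.toAddSubgroup hspan

variable (h4 : ∀ a b c d : ι → ℤ, a ∈ signedBasis ι → b ∈ signedBasis ι → c ∈ signedBasis ι →
  d ∈ signedBasis ι → a + b + c + d ∈ colSpan M → b = -a ∨ c = -a ∨ d = -a)

include h4 in
theorem noNontrivialFourCycles_latticeGens : NoNontrivialFourCycles (latticeGens M) := by
  rintro _ ⟨a, ha, rfl⟩ _ ⟨b, hb, rfl⟩ _ ⟨c, hc, rfl⟩ _ ⟨d, hd, rfl⟩ h
  simp only [← Submodule.Quotient.mk_add, Submodule.Quotient.mk_eq_zero] at h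
  rcases h4 a b c d ha hb hc hd h with rfl | rfl | rfl <;> simp [Submodule.Quotient.mk_neg]

include h4 in
theorem ne_neg_of_mem_latticeGens {s : LatticeVertex M} (hs : s ∈ latticeGens M) : s ≠ -s := by
  obtain ⟨a, ha, rfl⟩ := hs
  intro h
  rw [← Submodule.Quotient.mk_neg, Submodule.Quotient.eq, sub_neg_eq_add] at h
  rcases h4 a a a a ha ha ha ha (by simpa [add_assoc] using add_mem h h) with h' | h' | h' <;>
    exact ne_neg_of_mem_signedBasis ha h'

end Lattice

theorem automorphism_additive_of_no_nontrivial_four_cycles_general {n : ℕ}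
    (M : Matrix (Fin n) (Fin n) ℤ)
    (h4 : ∀ a b c d : Fin n → ℤ,
      (∃ i, a = _root_.stdBasis i ∨ a = -_root_.stdBasis i) →
      (∃ i, b = _root_.stdBasis i ∨ b = -_root_.stdBasis i) →
      (∃ i, c = _root_.stdBasis i ∨ c = -_root_.stdBasis i) →
      (∃ i, d = _root_.stdBasis i ∨ d = -_root_.stdBasis i) →
      a + b + c + d ∈ colSpan M → b = -a ∨ c = -a ∨ d = -a) :
    ∀ φ : latticeGraph M ≃g latticeGraph M, φ 0 = 0 →
      ∀ x y : LatticeVertex M, φ (x + y) = φ x + φ y := by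
  rw [latticeGraph_eq_addCayley]
  exact fun φ hφ => φ.map_add_of_noNontrivialFourCycles (noNontrivialFourCycles_latticeGens h4)
    (fun _ => neg_mem_latticeGens) (fun _ => ne_neg_of_mem_latticeGens h4) closure_latticeGens hφ

/-- if `𝒢(M)` has no nontrivial 4-cycles, then every graph automorphism
fixing `0` is an automorphism of the group `ℤⁿ/Mℤⁿ`. -/
theorem automorphism_additive_of_no_nontrivial_four_cycles {n : ℕ}
    (M : Matrix (Fin n) (Fin n) ℤ) (hM : M.det ≠ 0)
    (h4 : ∀ a b c d : Fin n → ℤ,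
      (∃ i, a = _root_.stdBasis i ∨ a = -_root_.stdBasis i) →
      (∃ i, b = _root_.stdBasis i ∨ b = -_root_.stdBasis i) →
      (∃ i, c = _root_.stdBasis i ∨ c = -_root_.stdBasis i) →
      (∃ i, d = _root_.stdBasis i ∨ d = -_root_.stdBasis i) →
      a + b + c + d ∈ colSpan M → b = -a ∨ c = -a ∨ d = -a) :
    ∀ φ : latticeGraph M ≃g latticeGraph M, φ 0 = 0 →
      ∀ x y : LatticeVertex M, φ (x + y) = φ x + φ y :=
  automorphism_additive_of_no_nontrivial_four_cycles_general M h4
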